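/- Let n ≥ 2 be an integer, a a real number, x_k = cos(kπ/n) for 1 ≤ k ≤ n−1, and F_a(x) := (1+a)·(T_n(x) + 2 − ((x+2)/n²)·T_n′(x)) − (1/n²)·(1−x)·(n² − T_n′(x)). Then, with 𝓛_k(f;x) := (1 − x_k·x)·f(x_k) + (1 − x_k²)·(x − x_k)·f′(x_k), one has for all real x: 𝓛_k(F_a;x) = (1−x_k)·(2(1+x)(1+a+x_k) + (a−x_k)(1+x_k)) if k is even, and 𝓛_k(F_a;x) = (a+x_k)·(1+x_k)·(1+x_k−2x) if k is odd. -/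

import Mathlib

open Polynomial Real

/-! At a critical point `c` of `T_n` the Chebyshev equation `(1 - x²) T_n'' = x T_n' - n² T_n`
gives `(1 - c²) T_n''(c) = -n² T_n(c)`. Since `𝓛(c, f; ·)` only involves `f'(c)` through
`(1 - c²) f'(c)`, this makes `𝓛(c, F_a; ·)` an explicit affine function whose coefficients are
polynomials in `c`, `a` and `T_n(c)`. The `x_k` are interior extrema of `T_n`, so Fermat's
theorem gives `T_n'(x_k) = 0`, and `T_n(x_k) = (-1)^k`. -/

/-- The `n`-th Chebyshev polynomial of the first kind, as a real polynomial. -/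
noncomputable def chebT (n : ℕ) : Polynomial ℝ := Polynomial.Chebyshev.T ℝ (n : ℤ)

/-- `F_a(x) = (1+a)(T_n(x) + 2 - ((x+2)/n²) T_n'(x)) - (1/n²)(1-x)(n² - T_n'(x))`. -/
noncomputable def F (n : ℕ) (a x : ℝ) : ℝ :=
  (1 + a) * ((chebT n).eval x + 2 - (x + 2) / (n : ℝ) ^ 2 * (derivative (chebT n)).eval x)
    - 1 / (n : ℝ) ^ 2 * (1 - x) * ((n : ℝ) ^ 2 - (derivative (chebT n)).eval x)

/-- `𝓛(c, f; x) = (1 - c x) f(c) + (1 - c²)(x - c) f'(c)`. -/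
noncomputable def Lfun (c : ℝ) (f : ℝ → ℝ) (x : ℝ) : ℝ :=
  (1 - c * x) * f c + (1 - c ^ 2) * (x - c) * deriv f c

lemma one_sub_sq_mul_eval_derivative_derivative_chebT (n : ℕ) (x : ℝ) :
    (1 - x ^ 2) * (derivative (derivative (chebT n))).eval x =
      x * (derivative (chebT n)).eval x - (n : ℝ) ^ 2 * (chebT n).eval x := by
  simpa [chebT] using Chebyshev.one_sub_X_sq_mul_iterate_derivative_T_eval (R := ℝ) n 0 x

lemma hasDerivAt_F (n : ℕ) (a x : ℝ) :
    HasDerivAt (F n a)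
      ((1 + a) * ((derivative (chebT n)).eval x
          - ((derivative (chebT n)).eval x
            + (x + 2) * (derivative (derivative (chebT n))).eval x) / (n : ℝ) ^ 2)
        + ((n : ℝ) ^ 2 - (derivative (chebT n)).eval x
            + (1 - x) * (derivative (derivative (chebT n))).eval x) / (n : ℝ) ^ 2) x := by
  have hT := (chebT n).hasDerivAt x
  have hT' := (derivative (chebT n)).hasDerivAt x
  have hx := hasDerivAt_id x
  refine ((((hT.add_const 2).sub (((hx.add_const 2).div_const ((n : ℝ) ^ 2)).mul hT')).const_mul
    (1 + a)).sub (((hx.const_sub 1).const_mul (1 / (n : ℝ) ^ 2)).mul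
      (hT'.const_sub ((n : ℝ) ^ 2)))).congr_deriv ?_
  simp only [id]
  ring

section CriticalPoint

variable {n : ℕ} {c : ℝ} (a : ℝ) (hn : n ≠ 0) (hc : (derivative (chebT n)).eval c = 0)
include hn hc

lemma F_eq_of_eval_derivative_chebT_eq_zero :
    F n a c = (1 + a) * ((chebT n).eval c + 2) - (1 - c) := by
  simp only [F, hc]
  field_simp
  ring

lemma one_sub_sq_mul_deriv_F_eq_of_eval_derivative_chebT_eq_zero :
    (1 - c ^ 2) * deriv (F n a) c =
      (1 + a) * (c + 2) * (chebT n).eval c + (1 - c ^ 2) - (1 - c) * (chebT n).eval c := by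
  have hODE := one_sub_sq_mul_eval_derivative_derivative_chebT n c
  rw [hc] at hODE
  rw [(hasDerivAt_F n a c).deriv, hc]
  field_simp
  linear_combination ((1 - c) - (1 + a) * (c + 2)) * hODE

lemma Lfun_F_eq_of_eval_derivative_chebT_eq_zero (x : ℝ) :
    Lfun c (F n a) x =
      (1 - c * x) * ((1 + a) * ((chebT n).eval c + 2) - (1 - c))
        + (x - c) * ((1 + a) * (c + 2) * (chebT n).eval c + (1 - c ^ 2)
            - (1 - c) * (chebT n).eval c) := by
  rw [Lfun, F_eq_of_eval_derivative_chebT_eq_zero a hn hc,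
    ← one_sub_sq_mul_deriv_F_eq_of_eval_derivative_chebT_eq_zero a hn hc]
  ring

end CriticalPoint

lemma eval_chebT_cos_mul_pi_div {n k : ℕ} (hk : k ≤ n) :
    (chebT n).eval (cos (k * π / n)) = (-1) ^ k :=
  Chebyshev.eval_T_real_node (Finset.mem_Iic.mpr hk)

lemma eval_derivative_chebT_cos_mul_pi_div {n k : ℕ} (hk₀ : 0 < k) (hkn : k < n) :
    (derivative (chebT n)).eval (cos (k * π / n)) = 0 :=
  (Chebyshev.isLocalExtr_T_real (by omega) hk₀ hkn).hasDerivAt_eq_zero ((chebT n).hasDerivAt _)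

theorem L_of_F_general (n : ℕ) (a : ℝ) (k : ℕ) (hk1 : 1 ≤ k) (hk2 : k ≤ n - 1) (x : ℝ) :
    (Even k →
      Lfun (Real.cos (k * π / n)) (F n a) x =
        (1 - Real.cos (k * π / n)) *
          (2 * (1 + x) * (1 + a + Real.cos (k * π / n))
            + (a - Real.cos (k * π / n)) * (1 + Real.cos (k * π / n)))) ∧
    (Odd k →
      Lfun (Real.cos (k * π / n)) (F n a) x =
        (a + Real.cos (k * π / n)) * (1 + Real.cos (k * π / n))
          * (1 + Real.cos (k * π / n) - 2 * x)) := by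
  have hL := Lfun_F_eq_of_eval_derivative_chebT_eq_zero a (by omega)
    (eval_derivative_chebT_cos_mul_pi_div (n := n) (k := k) (by omega) (by omega)) x
  rw [eval_chebT_cos_mul_pi_div (by omega)] at hL
  refine ⟨fun hk => ?_, fun hk => ?_⟩
  · rw [hL, hk.neg_one_pow]
    ring
  · rw [hL, hk.neg_one_pow]
    ring

/-- Explicit form of `𝓛_k(F_a;·)` at the zeros `x_k = cos(kπ/n)` of `T_n'`. -/
theorem L_of_F (n : ℕ) (hn : 2 ≤ n) (a : ℝ) (k : ℕ) (hk1 : 1 ≤ k) (hk2 : k ≤ n - 1) (x : ℝ) :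
    (Even k →
      Lfun (Real.cos (k * π / n)) (F n a) x =
        (1 - Real.cos (k * π / n)) *
          (2 * (1 + x) * (1 + a + Real.cos (k * π / n))
            + (a - Real.cos (k * π / n)) * (1 + Real.cos (k * π / n)))) ∧
    (Odd k →
      Lfun (Real.cos (k * π / n)) (F n a) x =
        (a + Real.cos (k * π / n)) * (1 + Real.cos (k * π / n))
          * (1 + Real.cos (k * π / n) - 2 * x)) :=
  L_of_F_general n a k hk1 hk2 x
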